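/- arXiv:1508.00954 — 2 statements merged into one kernel-verified Lean document; each statement's English description precedes it below -/
import Mathlib

section
/- Let Λ be a d-Gorenstein finite-dimensional algebra and M a finitely generated Λ-module. Then M is Gorenstein projective if and only if there exists an exact sequence 0 → M → P^0 → P^1 → ··· with each P^i projective. -/
/-!
STATEMENT 4: Let Λ be a d-Gorenstein finite-dimensional algebra and M a finitely generated
Λ-module.  Then M is Gorenstein projective iff there is an exact sequence
0 → M → P⁰ → P¹ → ⋯ with each Pⁱ projective.
-/

open CategoryTheory

/-- `G` is a Gorenstein projective `A`-module: there is an acyclic (exact) complex of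
projective `A`-modules `⋯ → P⁻¹ → P⁰ → P¹ → ⋯` which stays exact after applying
`Hom_A(-, A)` (the preadditive Yoneda functor of `A`), such that `G ≅ ker (P⁰ → P¹)`. -/
def IsGorensteinProjective (A : Type) [Ring A] (G : Type) [AddCommGroup G] [Module A G] :
    Prop :=
  ∃ C : CochainComplex (ModuleCat.{0} A) ℤ,
    (∀ n, CategoryTheory.Projective (C.X n)) ∧
    (∀ n, C.ExactAt n) ∧
    (∀ n : ℤ,
      ((((preadditiveYoneda.obj (ModuleCat.of A A)).mapHomologicalComplex _).obj
        C.op)).ExactAt n) ∧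
    Nonempty (G ≃ₗ[A] LinearMap.ker (C.d 0 1).hom)

/-- `M` has injective dimension at most `n`: there is an exact sequence
`0 → M → I⁰ → I¹ → ⋯ → Iⁿ → 0` with all `Iⁱ` injective. -/
def HasInjDimLE (A : Type) [Ring A] (M : ModuleCat.{0} A) (n : ℕ) : Prop :=
  ∃ C : CochainComplex (ModuleCat.{0} A) ℕ,
    (∀ i, CategoryTheory.Injective (C.X i)) ∧
    (∀ i, n < i → Limits.IsZero (C.X i)) ∧
    (∀ i, 0 < i → C.ExactAt i) ∧
    Nonempty (M ≃ₗ[A] LinearMap.ker (C.d 0 1).hom)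

/-!
If `M` is Gorenstein projective, the nonnegative part of its totally acyclic complex is the
required coresolution. Conversely, splicing a projective resolution of `M` onto the coresolution
gives an acyclic complex `E` of projectives, and it remains to see that `Hom(E, Λ)` is exact.
`Hom(E, I)` is exact for `I` injective, and for a short exact sequence `0 → N → I → N' → 0`
exactness of `Hom(E, I)` and `Hom(E, N')` gives that of `Hom(E, N)`, because each `Eⁿ` is
projective. Walking down an injective coresolution `0 → Λ → I⁰ → ⋯ → Iᵈ → 0` one cosyzygy at a
time therefore proves that `Hom(E, Λ)` is exact.
-/

open Limits HomologicalComplex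

universe v u

namespace CochainComplex

variable {𝒞 : Type u} [Category.{v} 𝒞] [Abelian 𝒞]

/-- The complex `Hom(E, N)` is exact. -/
def HomAcyclic (E : CochainComplex 𝒞 ℤ) (N : 𝒞) : Prop :=
  ∀ (m : ℤ) (g : E.X (m + 1) ⟶ N), E.d m (m + 1) ≫ g = 0 →
    ∃ ψ : E.X (m + 1 + 1) ⟶ N, E.d (m + 1) (m + 1 + 1) ≫ ψ = g

namespace HomAcyclic

variable {E : CochainComplex 𝒞 ℤ}

lemma of_isZero {N : 𝒞} (hN : IsZero N) : E.HomAcyclic N :=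
  fun _ _ _ => ⟨0, hN.eq_of_tgt _ _⟩

lemma of_iso {N N' : 𝒞} (e : N ≅ N') (h : E.HomAcyclic N') : E.HomAcyclic N := by
  intro m g hg
  obtain ⟨ψ, hψ⟩ := h m (g ≫ e.hom) (by rw [reassoc_of% hg, zero_comp])
  exact ⟨ψ ≫ e.inv, by rw [reassoc_of% hψ, e.hom_inv_id, Category.comp_id]⟩

lemma of_injective (hE : ∀ n, E.ExactAt n) (I : 𝒞) [Injective I] : E.HomAcyclic I := by
  intro m g hg
  have hS : (E.sc' m (m + 1) (m + 1 + 1)).Exact :=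
    (E.exactAt_iff' m (m + 1) (m + 1 + 1) (by simp) (by simp)).mp (hE (m + 1))
  exact ⟨hS.descToInjective g hg, hS.comp_descToInjective g hg⟩

lemma of_shortExact {S : ShortComplex 𝒞} (hS : S.ShortExact)
    (hE : ∀ n, Projective (E.X n)) (h₂ : E.HomAcyclic S.X₂) (h₃ : E.HomAcyclic S.X₃) :
    E.HomAcyclic S.X₁ := by
  intro m g hg
  have := hS.epi_g
  have := hS.mono_f
  -- Extend `g ≫ S.f` to `ψ`, extend the induced map into `S.X₃` to `θ` and lift `θ` through
  -- `S.g` to `τ`; then `ψ - d ≫ τ` still extends `g ≫ S.f` and factors through `S.f`.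
  obtain ⟨ψ, hψ⟩ := h₂ m (g ≫ S.f) (by rw [reassoc_of% hg, zero_comp])
  obtain ⟨θ, hθ⟩ := h₃ (m + 1) (ψ ≫ S.g) (by rw [reassoc_of% hψ, S.zero, comp_zero])
  let τ := Projective.factorThru θ S.g
  have hσ : (ψ - E.d _ _ ≫ τ) ≫ S.g = 0 := by simp [τ, hθ]
  refine ⟨hS.exact.lift _ hσ, ?_⟩
  rw [← cancel_mono S.f]
  simp [hψ]

lemma exactAt_preadditiveYoneda {N : 𝒞} (h : E.HomAcyclic N) (n : ℤ) :
    (((preadditiveYoneda.obj N).mapHomologicalComplex _).obj E.op).ExactAt n := by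
  obtain ⟨m, rfl⟩ : ∃ m, n = m + 1 := ⟨n - 1, by omega⟩
  rw [exactAt_iff' _ (m + 1 + 1) (m + 1) m
    ((ComplexShape.up ℤ).symm.prev_eq' rfl) ((ComplexShape.up ℤ).symm.next_eq' rfl),
    ShortComplex.ab_exact_iff]
  exact h m

end HomAcyclic

lemma shortExact_kernel_ι_kernel_lift (C : CochainComplex 𝒞 ℕ) (j : ℕ) (h : C.ExactAt (j + 1)) :
    (ShortComplex.mk (kernel.ι (C.d j (j + 1)))
      (kernel.lift (C.d (j + 1) (j + 1 + 1)) (C.d j (j + 1)) (C.d_comp_d _ _ _))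
      (by simp [← cancel_mono (kernel.ι _)])).ShortExact := by
  have hS : (C.sc' j (j + 1) (j + 1 + 1)).Exact :=
    (C.exactAt_iff' j (j + 1) (j + 1 + 1) (by simp) (by simp)).mp h
  refine .mk' (ShortComplex.exact_of_f_is_kernel _ ?_) inferInstance hS.epi_kernelLift
  exact isKernelOfComp (kernel.ι _) _ (kernelIsKernel _) _ (kernel.lift_ι _ _ _)

lemma homAcyclic_kernel_of_bounded_injective {C : CochainComplex 𝒞 ℕ} {d : ℕ}
    (hinj : ∀ i, Injective (C.X i)) (hzero : ∀ i, d < i → IsZero (C.X i))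
    (hC : ∀ i, 0 < i → C.ExactAt i) {E : CochainComplex 𝒞 ℤ}
    (hEproj : ∀ n, Projective (E.X n)) (hE : ∀ n, E.ExactAt n) (j : ℕ) (hj : j ≤ d + 1) :
    E.HomAcyclic (kernel (C.d j (j + 1))) := by
  induction hj using Nat.decreasingInduction with
  | self => exact .of_isZero (IsZero.of_mono (kernel.ι _) (hzero _ (lt_add_one d)))
  | of_succ j _ ih =>
    exact .of_shortExact (shortExact_kernel_ι_kernel_lift C j (hC _ j.succ_pos)) hEproj
      (.of_injective hE _) ih

lemma exactAt_restriction_embeddingUpIntGE {E : CochainComplex 𝒞 ℤ} (p : ℤ) {i : ℕ} (hi : 0 < i)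
    (hE : E.ExactAt (p + i)) : (E.restriction (ComplexShape.embeddingUpIntGE p)).ExactAt i := by
  obtain ⟨j, rfl⟩ : ∃ j, i = j + 1 := ⟨i - 1, by omega⟩
  rw [exactAt_iff' _ j (j + 1) (j + 1 + 1) (by simp) (by simp),
    ShortComplex.exact_iff_of_iso (restriction.sc'Iso E (ComplexShape.embeddingUpIntGE p)
      j (j + 1) (j + 1 + 1) rfl rfl rfl (by simp; omega) (by simp; omega))]
  exact (E.exactAt_iff' _ _ _ (by simp; omega) (by simp; omega)).1 hE

section ConnectProjectiveResolution

variable [EnoughProjectives 𝒞] (C : CochainComplex 𝒞 ℕ)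

-- `π.f 0` has target `((single₀ 𝒞).obj Z).X 0`, which is `Z` only after unfolding; the
-- ascription makes `Z` itself the middle object of the composite.
noncomputable def connectProjectiveResolutionData :
    ConnectData (projectiveResolution (kernel (C.d 0 1))).complex C where
  d₀ := ((projectiveResolution _).π.f 0 : _ ⟶ kernel (C.d 0 1)) ≫ kernel.ι _
  comp_d₀ := ((projectiveResolution _).complex_d_comp_π_f_zero_assoc _).trans zero_comp
  d₀_comp := (Category.assoc _ _ _).trans ((_ ≫= kernel.condition _).trans comp_zero)

noncomputable def connectProjectiveResolution : CochainComplex 𝒞 ℤ :=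
  (connectProjectiveResolutionData C).cochainComplex

variable {C}

lemma connectProjectiveResolution_projective (hC : ∀ i, Projective (C.X i)) :
    ∀ n, Projective (C.connectProjectiveResolution.X n)
  | .ofNat n => hC n
  | .negSucc n => (projectiveResolution _).projective n

lemma connectProjectiveResolution_exactAt_zero : C.connectProjectiveResolution.ExactAt 0 := by
  let h := connectProjectiveResolutionData C
  have hlift : kernel.lift (C.d 0 1) h.d₀ h.d₀_comp =
      ((projectiveResolution _).π.f 0 : _ ⟶ kernel (C.d 0 1)) :=
    (cancel_mono (kernel.ι _)).1 (kernel.lift_ι _ _ _)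
  rw [exactAt_iff' _ (-1) 0 1 (by simp) (by simp), ShortComplex.exact_iff_epi_kernel_lift]
  change Epi (kernel.lift (C.d 0 1) h.d₀ h.d₀_comp)
  rw [hlift]
  exact inferInstanceAs (Epi ((projectiveResolution _).π.f 0))

lemma connectProjectiveResolution_exactAt_neg_one :
    C.connectProjectiveResolution.ExactAt (-1) := by
  rw [exactAt_iff' _ (-2) (-1) 0 (by simp) (by simp)]
  let P := projectiveResolution (kernel (C.d 0 1))
  let φ : ShortComplex.mk _ _ P.complex_d_comp_π_f_zero ⟶
      C.connectProjectiveResolution.sc' (-2) (-1) 0 :=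
    { τ₁ := 𝟙 _, τ₂ := 𝟙 _, τ₃ := kernel.ι _
      comm₁₂ := (Category.id_comp _).trans (Category.comp_id _).symm
      comm₂₃ := Category.id_comp _ }
  have : Epi φ.τ₁ := inferInstanceAs (Epi (𝟙 _))
  have : IsIso φ.τ₂ := inferInstanceAs (IsIso (𝟙 _))
  have : Mono φ.τ₃ := inferInstanceAs (Mono (kernel.ι (C.d 0 1)))
  exact (ShortComplex.exact_iff_of_epi_of_isIso_of_mono φ).1 P.exact₀

lemma connectProjectiveResolution_exactAt (hC : ∀ i, 0 < i → C.ExactAt i) (n : ℤ) :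
    C.connectProjectiveResolution.ExactAt n := by
  obtain (_ | n) | (_ | n) := n
  · exact connectProjectiveResolution_exactAt_zero
  · rw [exactAt_iff_isZero_homology]
    exact ((C.exactAt_iff_isZero_homology _).1 (hC (n + 1) n.succ_pos)).of_iso
      ((connectProjectiveResolutionData C).homologyIsoPos (n + 1) _ rfl)
  · exact connectProjectiveResolution_exactAt_neg_one
  · rw [exactAt_iff_isZero_homology]
    exact ((projectiveResolution _).complex.exactAt_iff_isZero_homology _).1
      ((projectiveResolution _).complex_exactAt_succ n) |>.of_iso
      ((connectProjectiveResolutionData C).homologyIsoNeg (n + 1) _ rfl)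

end ConnectProjectiveResolution

end CochainComplex

theorem isGorensteinProjective_iff_exists_right_projective_resolution_general
    (A : Type) [Ring A] (d : ℕ)
    (hGorL : HasInjDimLE A (ModuleCat.of A A) d)
    (M : Type) [AddCommGroup M] [Module A M] :
    IsGorensteinProjective A M ↔
      ∃ C : CochainComplex (ModuleCat.{0} A) ℕ,
        (∀ i, CategoryTheory.Projective (C.X i)) ∧
        (∀ i, 0 < i → C.ExactAt i) ∧
        Nonempty (M ≃ₗ[A] LinearMap.ker (C.d 0 1).hom) := by
  constructor
  · rintro ⟨E, hEproj, hE, -, ⟨e⟩⟩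
    exact ⟨E.restriction (ComplexShape.embeddingUpIntGE 0), fun i => hEproj _,
      fun i hi => CochainComplex.exactAt_restriction_embeddingUpIntGE 0 hi (hE _), ⟨e⟩⟩
  · rintro ⟨C, hCproj, hC, ⟨e⟩⟩
    obtain ⟨I, hIinj, hIzero, hI, ⟨eA⟩⟩ := hGorL
    have hEproj := CochainComplex.connectProjectiveResolution_projective hCproj
    have hE := CochainComplex.connectProjectiveResolution_exactAt hC
    have hEA : C.connectProjectiveResolution.HomAcyclic (ModuleCat.of A A) :=
      .of_iso (eA.toModuleIso ≪≫ (ModuleCat.kernelIsoKer _).symm)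
        (CochainComplex.homAcyclic_kernel_of_bounded_injective hIinj hIzero hI hEproj hE 0
          (Nat.zero_le _))
    exact ⟨C.connectProjectiveResolution, hEproj, hE, hEA.exactAt_preadditiveYoneda, ⟨e⟩⟩

/-- Over a d-Gorenstein algebra, a finitely generated module is Gorenstein projective iff
it embeds in an exact sequence 0 → M → P⁰ → P¹ → ⋯ of projectives. -/
theorem isGorensteinProjective_iff_exists_right_projective_resolution
    (K A : Type) [Field K] [Ring A] [Algebra K A] [FiniteDimensional K A] (d : ℕ)
    (hGorL : HasInjDimLE A (ModuleCat.of A A) d)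
    (hGorR : HasInjDimLE Aᵐᵒᵖ (ModuleCat.of Aᵐᵒᵖ Aᵐᵒᵖ) d)
    (M : Type) [AddCommGroup M] [Module A M] [Module.Finite A M] :
    IsGorensteinProjective A M ↔
      ∃ C : CochainComplex (ModuleCat.{0} A) ℕ,
        (∀ i, CategoryTheory.Projective (C.X i)) ∧
        (∀ i, 0 < i → C.ExactAt i) ∧
        Nonempty (M ≃ₗ[A] LinearMap.ker (C.d 0 1).hom) :=
  isGorensteinProjective_iff_exists_right_projective_resolution_general A d hGorL M
end

section
/- Let Y = {((a₀:a₁:a₂),(c₀:c₁),(b₀:b₁:b₂)) ∈ ℙ² × ℙ¹ × ℙ² : a₀c₀ + a₁c₁ = 0 and b₁c₀ = b₀c₁}. Then the projection π: Y → ℙ² × ℙ², ((a),(c),(b)) ↦ ((a),(b)), maps Y onto X = {a₀b₀ + a₁b₁ = 0} ⊆ ℙ² × ℙ². -/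
/-!
STATEMENT 10: Let Y = {((a₀:a₁:a₂),(c₀:c₁),(b₀:b₁:b₂)) ∈ ℙ² × ℙ¹ × ℙ² :
a₀c₀ + a₁c₁ = 0 and b₁c₀ = b₀c₁}.  Then the projection π : Y → ℙ² × ℙ²,
((a),(c),(b)) ↦ ((a),(b)), maps Y onto X = {a₀b₀ + a₁b₁ = 0} ⊆ ℙ² × ℙ².

Points of ℙⁿ are formalized via `Projectivization`; the (bihomogeneous) defining equations
are evaluated on the chosen representatives `Projectivization.rep`, which is well defined
since the conditions are invariant under rescaling the representatives.
-/

open Projectivization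

variable (K : Type) [Field K] [IsAlgClosed K]

/-- X = {((a₀:a₁:a₂),(b₀:b₁:b₂)) : a₀b₀ + a₁b₁ = 0} ⊆ ℙ² × ℙ². -/
def Xvar : Set (Projectivization K (Fin 3 → K) × Projectivization K (Fin 3 → K)) :=
  {z | z.1.rep 0 * z.2.rep 0 + z.1.rep 1 * z.2.rep 1 = 0}

/-- Y = {((a),(c),(b)) : a₀c₀ + a₁c₁ = 0, b₁c₀ = b₀c₁} ⊆ ℙ² × ℙ¹ × ℙ². -/
def Yvar : Set (Projectivization K (Fin 3 → K) × Projectivization K (Fin 2 → K) ×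
    Projectivization K (Fin 3 → K)) :=
  {z | z.1.rep 0 * z.2.1.rep 0 + z.1.rep 1 * z.2.1.rep 1 = 0 ∧
       z.2.2.rep 1 * z.2.1.rep 0 = z.2.2.rep 0 * z.2.1.rep 1}

lemma rep_mk_smul {K : Type} [Field K] {n : ℕ} (v : Fin n → K) (hv : v ≠ 0) :
    ∃ t : Kˣ, (Projectivization.mk K v hv).rep = t • v := by
  have h := Projectivization.mk_rep (Projectivization.mk K v hv)
  rw [Projectivization.mk_eq_mk_iff] at h
  obtain ⟨t, ht⟩ := h
  exact ⟨t, ht.symm⟩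

/-- The projection π : Y → ℙ² × ℙ², ((a),(c),(b)) ↦ ((a),(b)), maps Y onto X. -/
theorem proj_Y_onto_X :
    ∀ x ∈ Xvar K, ∃ y ∈ Yvar K, (y.1, y.2.2) = x := by
  rintro ⟨A, B⟩ hx
  simp only [Xvar, Set.mem_setOf_eq] at hx
  set a := A.rep with ha
  set b := B.rep with hb
  by_cases h1 : a 0 ≠ 0 ∨ a 1 ≠ 0
  · have hv : (![a 1, -a 0] : Fin 2 → K) ≠ 0 := by
      intro h
      rcases h1 with h1 | h1
      · exact h1 (by have := congrFun h 1; simpa using (neg_eq_zero.mp (by simpa using this)))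
      · exact h1 (by simpa using congrFun h 0)
    obtain ⟨t, ht⟩ := rep_mk_smul _ hv
    refine ⟨(A, Projectivization.mk K _ hv, B), ?_, rfl⟩
    constructor
    · show a 0 * _ + a 1 * _ = 0
      rw [ht]; simp [Pi.smul_apply, Units.smul_def]; ring
    · show b 1 * _ = b 0 * _
      rw [ht]; simp only [Pi.smul_apply, Matrix.cons_val_zero, Matrix.cons_val_one,
        Matrix.head_cons, Units.smul_def, smul_eq_mul]
      linear_combination (t : K) * hx
  · push_neg at h1
    obtain ⟨ha0, ha1⟩ := h1
    by_cases h2 : b 0 ≠ 0 ∨ b 1 ≠ 0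
    · have hv : (![b 0, b 1] : Fin 2 → K) ≠ 0 := by
        intro h
        rcases h2 with h2 | h2
        · exact h2 (by simpa using congrFun h 0)
        · exact h2 (by simpa using congrFun h 1)
      obtain ⟨t, ht⟩ := rep_mk_smul _ hv
      refine ⟨(A, Projectivization.mk K _ hv, B), ?_, rfl⟩
      constructor
      · show a 0 * _ + a 1 * _ = 0
        rw [ht, ha0, ha1]; ring
      · show b 1 * _ = b 0 * _
        rw [ht]; simp [Pi.smul_apply, Units.smul_def]; ring
    · push_neg at h2
      obtain ⟨hb0, hb1⟩ := h2
      have hv : (![1, 0] : Fin 2 → K) ≠ 0 := by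
        intro h; simpa using congrFun h 0
      obtain ⟨t, ht⟩ := rep_mk_smul _ hv
      refine ⟨(A, Projectivization.mk K _ hv, B), ?_, rfl⟩
      constructor
      · show a 0 * _ + a 1 * _ = 0
        rw [ht, ha0, ha1]; ring
      · show b 1 * _ = b 0 * _
        rw [ht, hb0, hb1]; ring
end
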